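/- Let p be an integer-valued supermodular set-function on the subsets of a nonempty finite set S with p(∅) = 0, and assume Ḃ(p) is nonempty. Then the peak set S₁ (the intersection of all subsets of S maximizing h₁) is itself a maximizer of h₁, and for every pre-dec-min element m of Ḃ(p) one has S₁(m) = S₁. In particular, S₁(m) is the same for every pre-dec-min element m of Ḃ(p). -/

import Mathlib

open Finset

variable {α : Type*}

/-- Integer-valued supermodular set-function. -/
def Supermodular [DecidableEq α] (p : Finset α → ℤ) : Prop :=
  ∀ X Y : Finset α, p X + p Y ≤ p (X ∩ Y) + p (X ∪ Y)

/-- The M-convex set `Ḃ(p)` of integral elements of the base-polyhedron `B'(p)`: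
all `m : α → ℤ` with `m̃(X) ≥ p(X)` for every `X` and `m̃(S) = p(S)`. -/
def Bdot [Fintype α] (p : Finset α → ℤ) : Set (α → ℤ) :=
  {m | (∀ X : Finset α, p X ≤ ∑ s ∈ X, m s) ∧ (∑ s, m s) = p Finset.univ}

/-- `x↓`: the values of `x` arranged in nonincreasing order. -/
def sortedDesc [Fintype α] (x : α → ℤ) : List ℤ :=
  ((Finset.univ.val.map x).sort (· ≤ ·)).reverse

/-- `x↑`: the values of `x` arranged in nondecreasing order. -/
def sortedAsc [Fintype α] (x : α → ℤ) : List ℤ :=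
  (Finset.univ.val.map x).sort (· ≤ ·)

/-- `x ≤_dec y`: `x↓` is lexicographically less than or equal to `y↓`. -/
def DecLE [Fintype α] (x y : α → ℤ) : Prop :=
  sortedDesc x = sortedDesc y ∨ List.Lex (· < ·) (sortedDesc x) (sortedDesc y)

/-- `x ≤_inc y`: `x↑` is lexicographically less than or equal to `y↑`. -/
def IncLE [Fintype α] (x y : α → ℤ) : Prop :=
  sortedAsc x = sortedAsc y ∨ List.Lex (· < ·) (sortedAsc x) (sortedAsc y)

/-- `m` is a decreasingly minimal element of `Bdot p`. -/
def DecMin [Fintype α] (p : Finset α → ℤ) (m : α → ℤ) : Prop :=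
  m ∈ Bdot p ∧ ∀ y ∈ Bdot p, DecLE m y

/-- `m` is `β`-covered: every component is at most `β`. -/
def IsCovered [Fintype α] (β : ℤ) (m : α → ℤ) : Prop := ∀ s : α, m s ≤ β

/-- `m` is a pre-dec-min element of `Ḃ(p)` (with respect to the bound `β`):
it is a `β`-covered element of `Ḃ(p)` with a minimum number of `β`-valued
components among all `β`-covered elements of `Ḃ(p)`. -/
def PreDecMin [Fintype α] [DecidableEq α] (p : Finset α → ℤ) (β : ℤ) (m : α → ℤ) : Prop :=
  m ∈ Bdot p ∧ IsCovered β m ∧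
    ∀ m' ∈ Bdot p, IsCovered β m' →
      (Finset.univ.filter (fun s => m s = β)).card ≤
        (Finset.univ.filter (fun s => m' s = β)).card

/-- `S₁(m)`: the intersection of all `m`-tight sets containing every `β`-valued element. -/
def S1m [Fintype α] (p : Finset α → ℤ) (β : ℤ) (m : α → ℤ) : Set α :=
  {s | ∀ X : Finset α, (∑ v ∈ X, m v = p X) → (∀ t : α, m t = β → t ∈ X) → s ∈ X}

/-!
Maximizers of `h₁` are closed under intersection by supermodularity, so `S₁` is the least
maximizer. Fix a pre-dec-min `m` and let `T = {m = β₁}`. Since `m ≤ β₁`, every `X` satisfies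
`h₁(X) ≤ m̃(X) - (β₁ - 1)|X| ≤ |X ∩ T| ≤ |T|`, with equality when `X` is `m`-tight, contains `T`
and `m ≥ β₁ - 1` on `X`. The least `m`-tight set `S₁(m)` containing `T` satisfies the last
condition: if `m(s) ≤ β₁ - 2` for some `s ∈ S₁(m)`, some `t ∈ T` lies only in tight sets
containing `s`, and moving one unit from `t` to `s` stays in `Ḃ(p)` and has fewer `β₁`-valued
components. So `S₁(m)` is a maximizer, and every maximizer, attaining `|T|`, is a tight set
containing `T`, hence contains `S₁(m)`.
-/

lemma InfClosed.exists_isLeast {L : Type*} [SemilatticeInf L] {s : Set L} (hs : InfClosed s)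
    (hfin : s.Finite) (hne : s.Nonempty) : ∃ a, IsLeast s a :=
  have hne' : hfin.toFinset.Nonempty := hfin.toFinset_nonempty.2 hne
  ⟨hfin.toFinset.inf' hne' id,
    hs.finsetInf'_mem hne' fun _ h => hfin.mem_toFinset.1 h,
    fun _ h => inf'_le id (hfin.mem_toFinset.2 h)⟩

lemma IsLeast.mem_iff_forall_mem {P : Set (Finset α)} {W : Finset α} (hW : IsLeast P W) {x : α} :
    x ∈ W ↔ ∀ X ∈ P, x ∈ X :=
  ⟨fun hx _ hX => hW.2 hX hx, fun h => h W hW.1⟩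

lemma infClosed_maximizers [DecidableEq α] {p : Finset α → ℤ} (hp : Supermodular p) (c : ℤ) :
    InfClosed {X : Finset α | ∀ Y : Finset α, p Y - c * #Y ≤ p X - c * #X} := by
  intro X hX Y hY Z
  have hcard : (#(X ∩ Y) : ℤ) + #(X ∪ Y) = #X + #Y := by
    exact_mod_cast card_inter_add_card_union X Y
  change _ ≤ p (X ∩ Y) - c * #(X ∩ Y)
  linear_combination hp X Y + hX (X ∪ Y) + hY Z + c * hcard

section Tight

variable {p : Finset α → ℤ} {m : α → ℤ}

def IsTight (p : Finset α → ℤ) (m : α → ℤ) (X : Finset α) : Prop :=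
  ∑ v ∈ X, m v = p X

lemma IsTight.inter_union [Fintype α] [DecidableEq α] (hp : Supermodular p) (hm : m ∈ Bdot p)
    {X Y : Finset α} (hX : IsTight p m X) (hY : IsTight p m Y) :
    IsTight p m (X ∩ Y) ∧ IsTight p m (X ∪ Y) := by
  have := hp X Y
  have := hm.1 (X ∩ Y)
  have := hm.1 (X ∪ Y)
  have : ∑ v ∈ X ∪ Y, m v + ∑ v ∈ X ∩ Y, m v = ∑ v ∈ X, m v + ∑ v ∈ Y, m v :=
    sum_union_inter
  unfold IsTight at *
  constructor <;> linarith

lemma infClosed_isTight_superset [Fintype α] [DecidableEq α] (hp : Supermodular p)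
    (hm : m ∈ Bdot p) (T : Finset α) : InfClosed {X | IsTight p m X ∧ T ⊆ X} :=
  fun _ hX _ hY => ⟨(hX.1.inter_union hp hm hY.1).1, subset_inter hX.2 hY.2⟩

lemma exists_forall_isTight_mem_imp_mem [Fintype α] [DecidableEq α] (hp : Supermodular p)
    (hm : m ∈ Bdot p) {T : Finset α} (hT : T.Nonempty) {s : α}
    (hs : ∀ X, IsTight p m X → T ⊆ X → s ∈ X) :
    ∃ t ∈ T, ∀ X, IsTight p m X → t ∈ X → s ∈ X := by
  by_contra! h
  -- the union of the tight sets through the `t ∈ T` avoiding `s` is a tight superset of `T`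
  choose! X hX using h
  have hclosed : SupClosed {Y | IsTight p m Y ∧ s ∉ Y} :=
    fun Y hY Z hZ => ⟨(hY.1.inter_union hp hm hZ.1).2, by simp [hY.2, hZ.2]⟩
  have hU : T.sup' hT X ∈ {Y | IsTight p m Y ∧ s ∉ Y} :=
    hclosed.finsetSup'_mem hT fun t ht => ⟨(hX t ht).1, (hX t ht).2.2⟩
  exact hU.2 (hs _ hU.1 fun t ht => le_sup' X ht (hX t ht).2.1)

end Tight

section Exchange

lemma sum_add_single_sub_single [DecidableEq α] (m : α → ℤ) (s t : α) (X : Finset α) :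
    ∑ v ∈ X, (m + Pi.single s 1 - Pi.single t 1 : α → ℤ) v =
      ∑ v ∈ X, m v + (if s ∈ X then 1 else 0) - (if t ∈ X then 1 else 0) := by
  simp only [Pi.sub_apply, Pi.add_apply, sum_sub_distrib, sum_add_distrib, sum_pi_single']

variable {m : α → ℤ} {s t : α}

lemma add_single_sub_single_mem_Bdot [Fintype α] [DecidableEq α] {p : Finset α → ℤ}
    (hm : m ∈ Bdot p) (hst : ∀ X, IsTight p m X → t ∈ X → s ∈ X) :
    m + Pi.single s 1 - Pi.single t 1 ∈ Bdot p := by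
  refine ⟨fun X => ?_, ?_⟩
  · have := hm.1 X
    rw [sum_add_single_sub_single]
    split_ifs with hsX htX htX
    · omega
    · omega
    · have hX : ¬IsTight p m X := fun hX => hsX (hst X hX htX)
      unfold IsTight at hX
      omega
    · omega
  · have := sum_add_single_sub_single m s t univ
    simp only [mem_univ, if_true] at this
    rw [this, hm.2]
    ring

lemma isCovered_add_single_sub_single [Fintype α] [DecidableEq α] {β : ℤ} (hm : IsCovered β m)
    (hs : m s < β) : IsCovered β (m + Pi.single s 1 - Pi.single t 1) := by
  intro v
  have := hm v
  simp only [Pi.sub_apply, Pi.add_apply, Pi.single_apply]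
  split_ifs <;> subst_vars <;> omega

lemma card_filter_add_single_sub_single_lt [Fintype α] [DecidableEq α] {β : ℤ}
    (hs : m s + 1 < β) (ht : m t = β) :
    #{v | (m + Pi.single s 1 - Pi.single t 1 : α → ℤ) v = β} < #{v | m v = β} := by
  refine lt_of_le_of_lt (card_le_card fun v hv => ?_)
    (card_erase_lt_of_mem (mem_filter.2 ⟨mem_univ t, ht⟩))
  simp only [mem_filter, mem_univ, true_and, Pi.sub_apply, Pi.add_apply, Pi.single_apply,
    mem_erase] at hv ⊢
  split_ifs at hv with hvs hvt hvt <;> subst_vars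
  · omega
  · omega
  · omega
  · exact ⟨hvt, by omega⟩

end Exchange

section PreDecMin

variable {p : Finset α → ℤ} {m : α → ℤ} {β : ℤ}

lemma sum_sub_mul_card_le_card_filter [Fintype α] (hm : IsCovered β m) (X : Finset α) :
    ∑ v ∈ X, m v - (β - 1) * #X ≤ #{v ∈ X | m v = β} := by
  rw [natCast_card_filter, mul_comm, ← nsmul_eq_mul, ← sum_const, ← sum_sub_distrib]
  exact sum_le_sum fun v _ => by have := hm v; split_ifs <;> omega

lemma sum_sub_mul_card_eq_card_filter [Fintype α] (hm : IsCovered β m) {X : Finset α}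
    (hX : ∀ v ∈ X, β - 1 ≤ m v) : ∑ v ∈ X, m v - (β - 1) * #X = #{v ∈ X | m v = β} := by
  rw [natCast_card_filter, mul_comm, ← nsmul_eq_mul, ← sum_const, ← sum_sub_distrib]
  exact sum_congr rfl fun v hv => by have := hm v; have := hX v hv; split_ifs <;> omega

variable [Fintype α] [DecidableEq α]

lemma PreDecMin.exists_apply_eq
    (hβ : β ∈ lowerBounds {b : ℤ | ∃ m ∈ Bdot p, ∀ s : α, m s ≤ b}) (hm : PreDecMin p β m) :
    ∃ t, m t = β := by
  by_contra! h
  have := hβ ⟨m, hm.1, fun s => Int.le_sub_one_of_lt ((hm.2.1 s).lt_of_ne (h s))⟩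
  omega

lemma PreDecMin.sub_one_le_of_mem (hp : Supermodular p)
    (hβ : β ∈ lowerBounds {b : ℤ | ∃ m ∈ Bdot p, ∀ s : α, m s ≤ b}) (hm : PreDecMin p β m)
    {W : Finset α} (hW : IsLeast {X | IsTight p m X ∧ ({v | m v = β} : Finset α) ⊆ X} W)
    {s : α} (hs : s ∈ W) : β - 1 ≤ m s := by
  by_contra! hs'
  obtain ⟨t₀, ht₀⟩ := hm.exists_apply_eq hβ
  obtain ⟨t, ht, hst⟩ := exists_forall_isTight_mem_imp_mem hp hm.1
    ⟨t₀, mem_filter.2 ⟨mem_univ t₀, ht₀⟩⟩ fun X hX hTX => hW.2 ⟨hX, hTX⟩ hs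
  have hcard := hm.2.2 _ (add_single_sub_single_mem_Bdot hm.1 hst)
    (isCovered_add_single_sub_single hm.2.1 (by omega))
  exact hcard.not_gt (card_filter_add_single_sub_single_lt (by omega) (mem_filter.1 ht).2)

lemma PreDecMin.isLeast_maximizers (hp : Supermodular p)
    (hβ : β ∈ lowerBounds {b : ℤ | ∃ m ∈ Bdot p, ∀ s : α, m s ≤ b}) (hm : PreDecMin p β m)
    {W : Finset α} (hW : IsLeast {X | IsTight p m X ∧ ({v | m v = β} : Finset α) ⊆ X} W) :
    IsLeast {X : Finset α | ∀ Y : Finset α, p Y - (β - 1) * #Y ≤ p X - (β - 1) * #X} W := by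
  set T : Finset α := {v | m v = β}
  have hchain (X : Finset α) :
      p X - (β - 1) * #X ≤ ∑ v ∈ X, m v - (β - 1) * #X ∧
        ∑ v ∈ X, m v - (β - 1) * #X ≤ #{v ∈ X | m v = β} ∧ #{v ∈ X | m v = β} ≤ #T :=
    ⟨by linarith [hm.1.1 X], sum_sub_mul_card_le_card_filter hm.2.1 X,
      card_le_card (filter_subset_filter _ (subset_univ X))⟩
  have hWT : {v ∈ W | m v = β} = T := (filter_subset_filter _ (subset_univ W)).antisymm
    fun v hv => mem_filter.2 ⟨hW.1.2 hv, (mem_filter.1 hv).2⟩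
  have hW_val : p W - (β - 1) * #W = #T := by
    rw [← hW.1.1, sum_sub_mul_card_eq_card_filter hm.2.1 fun v => hm.sub_one_le_of_mem hp hβ hW,
      hWT]
  refine ⟨fun Y => by have := hchain Y; omega, fun X hX => ?_⟩
  have := hchain X
  have := hX W
  have hcard : #T ≤ #{v ∈ X | m v = β} := by omega
  have hXT := eq_of_subset_of_card_le (filter_subset_filter _ (subset_univ X)) hcard
  exact hW.2 ⟨by unfold IsTight; omega, fun v hv => (mem_filter.1 (hXT.ge hv)).1⟩

end PreDecMin

theorem stmt5_general [Fintype α] [DecidableEq α]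
    (p : Finset α → ℤ) (hp : Supermodular p) (β₁ : ℤ)
    (hβ : IsLeast {b : ℤ | ∃ m ∈ Bdot p, ∀ s : α, m s ≤ b} β₁)
    (S₁ : Finset α)
    (hS₁ : ∀ s : α, s ∈ S₁ ↔ ∀ X : Finset α,
      (∀ Y : Finset α, p Y - (β₁ - 1) * Y.card ≤ p X - (β₁ - 1) * X.card) → s ∈ X) :
    (∀ Y : Finset α, p Y - (β₁ - 1) * Y.card ≤ p S₁ - (β₁ - 1) * S₁.card) ∧
    (∀ m : α → ℤ, PreDecMin p β₁ m → S1m p β₁ m = ↑S₁) := by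
  obtain ⟨X₀, -, hX₀⟩ :=
    exists_max_image univ (fun X : Finset α => p X - (β₁ - 1) * #X) univ_nonempty
  obtain ⟨W, hW⟩ := (infClosed_maximizers hp (β₁ - 1)).exists_isLeast (Set.toFinite _)
    ⟨X₀, fun Y => hX₀ Y (mem_univ Y)⟩
  have hS₁W : S₁ = W := ext fun s => (hS₁ s).trans hW.mem_iff_forall_mem.symm
  refine ⟨hS₁W ▸ hW.1, fun m hm => ?_⟩
  obtain ⟨V, hV⟩ := (infClosed_isTight_superset hp hm.1 {v | m v = β₁}).exists_isLeast
    (Set.toFinite _) ⟨univ, hm.1.2, subset_univ _⟩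
  rw [hS₁W, ← (hm.isLeast_maximizers hp hβ.2 hV).unique hW]
  ext s
  simp only [S1m, Set.mem_ofPred_eq, mem_coe, hV.mem_iff_forall_mem, IsTight, subset_iff,
    mem_filter, mem_univ, true_and, and_imp]

/-- The peak set `S₁` (the intersection of all maximizers of
`h₁(X) = p(X) − (β₁ − 1)·|X|`) is itself a maximizer of `h₁`, and
`S₁(m) = S₁` for every pre-dec-min element `m` of `Ḃ(p)`. -/
theorem stmt5 [Fintype α] [DecidableEq α] [Nonempty α]
    (p : Finset α → ℤ) (hp : Supermodular p) (h0 : p ∅ = 0)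
    (hne : (Bdot p).Nonempty) (β₁ : ℤ)
    (hβ : IsLeast {b : ℤ | ∃ m ∈ Bdot p, ∀ s : α, m s ≤ b} β₁)
    (S₁ : Finset α)
    (hS₁ : ∀ s : α, s ∈ S₁ ↔ ∀ X : Finset α,
      (∀ Y : Finset α, p Y - (β₁ - 1) * Y.card ≤ p X - (β₁ - 1) * X.card) → s ∈ X) :
    (∀ Y : Finset α, p Y - (β₁ - 1) * Y.card ≤ p S₁ - (β₁ - 1) * S₁.card) ∧
    (∀ m : α → ℤ, PreDecMin p β₁ m → S1m p β₁ m = ↑S₁) :=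
  stmt5_general p hp β₁ hβ S₁ hS₁
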